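/- arXiv:2310.06728 — 13 statements merged into one kernel-verified Lean document; each statement's English description precedes it below -/
import Mathlib

section
/- Let Σ be a subsemigroup of S × [0,1] (with second coordinate under min) satisfying: (s-i) the projection of Σ to S is all of S; (s-ii) for every b ∈ S, (b, sup{y : (b,y) ∈ Σ}) ∈ Σ; (s-iii) if (b,z) ∈ Σ for some z and y ≤ sup{z : (b,z) ∈ Σ}, then (b,y) ∈ Σ. Then the function f : S → [0,1] defined by f(b) = sup{y : (b,y) ∈ Σ} is a fuzzy subsemigroup of S, and moreover {(b,y) : f(b) ≥ y} = Σ. -/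
open Classical Pointwise

/-- Composition of fuzzy subsets: `(f ∘ g)(a) = ⋁_{a = b c} min (f b) (g c)`,
and `0` if `a` admits no factorization (since `Real.sSup ∅ = 0`). -/
noncomputable def fComp {S : Type*} [Semigroup S] (f g : S → ℝ) (a : S) : ℝ :=
  sSup {x : ℝ | ∃ b c : S, a = b * c ∧ x = min (f b) (g c)}

/-- Componentwise product on `S × [0,1]`: `(a,x)(b,y) = (ab, min x y)`. -/
def pmul {S : Type*} [Semigroup S] (p q : S × ℝ) : S × ℝ := (p.1 * q.1, min p.2 q.2)

/-- A fuzzy subsemigroup of `S`: a `[0,1]`-valued map with `f (a b) ≥ min (f a) (f b)`. -/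
def FuzzySubsemigroup {S : Type*} [Semigroup S] (f : S → ℝ) : Prop :=
  (∀ a : S, f a ∈ Set.Icc (0:ℝ) 1) ∧ ∀ a b : S, min (f a) (f b) ≤ f (a * b)

/-- The set `𝔖(S,f) = {(b,y) ∈ S × [0,1] : f b ≥ y}`. -/
def fuzzyGraph {S : Type*} [Semigroup S] (f : S → ℝ) : Set (S × ℝ) :=
  {p : S × ℝ | p.2 ∈ Set.Icc (0:ℝ) 1 ∧ p.2 ≤ f p.1}

/-- A fuzzy left ideal of `S`. -/
def FuzzyLeftIdeal {S : Type*} [Semigroup S] (f : S → ℝ) : Prop :=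
  (∀ a : S, f a ∈ Set.Icc (0:ℝ) 1) ∧ ∀ a b : S, f b ≤ f (a * b)

/-- A fuzzy right ideal of `S`. -/
def FuzzyRightIdeal {S : Type*} [Semigroup S] (f : S → ℝ) : Prop :=
  (∀ a : S, f a ∈ Set.Icc (0:ℝ) 1) ∧ ∀ a b : S, f a ≤ f (a * b)

/-- The constant fuzzy subset `S` with value `1`. -/
def fuzzyOne (S : Type*) : S → ℝ := fun _ => (1:ℝ)

/-- A fuzzy quasi-ideal of `S`: `q ∘ S ∩ S ∘ q ⊆ q`. -/
def FuzzyQuasiIdeal {S : Type*} [Semigroup S] (q : S → ℝ) : Prop :=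
  (∀ a : S, q a ∈ Set.Icc (0:ℝ) 1) ∧
  ∀ a : S, min (fComp q (fuzzyOne S) a) (fComp (fuzzyOne S) q a) ≤ q a

/-- Characteristic function of a subset, valued in `[0,1] ⊆ ℝ`. -/
noncomputable def chi {S : Type*} (A : Set S) : S → ℝ := Set.indicator A (fun _ => (1:ℝ))

/-- A semilattice decomposition of `S` indexed by a semigroup `Y`
(assumed commutative and idempotent where used). -/
def IsSemilatticeDecomp {Y S : Type*} [Semigroup Y] [Semigroup S] (T : Y → Set S) : Prop :=
  (∀ α : Y, (T α).Nonempty) ∧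
  (∀ α : Y, ∀ a ∈ T α, ∀ b ∈ T α, a * b ∈ T α) ∧
  (∀ α β : Y, α ≠ β → Disjoint (T α) (T β)) ∧
  (⋃ α : Y, T α) = Set.univ ∧
  (∀ α β : Y, ∀ a ∈ T α, ∀ b ∈ T β, a * b ∈ T (α * β))

/-- A family `f : Y → S → ℝ` is a fuzzy semilattice of fuzzy subsemigroups of `S`. -/
def IsFuzzySemilattice {Y S : Type*} [Semigroup Y] [Semigroup S] (f : Y → S → ℝ) : Prop :=
  (∀ α : Y, FuzzySubsemigroup (f α)) ∧
  (∀ α β : Y, α ≠ β → ∀ a : S, min (f α a) (f β a) = 0) ∧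
  (∀ α β : Y, ∀ a : S, fComp (f α) (f β) a ≤ f (α * β) a) ∧
  (∀ (α : Y) (t : ℝ), t ∈ Set.Ioc (0:ℝ) 1 → ∃ a : S, t ≤ f α a) ∧
  (∀ (a : S) (t : ℝ), t ∈ Set.Ioc (0:ℝ) 1 → ∃ α : Y, t ≤ f α a)

/-- A left simple subsemigroup `T` of `S`: `T a = T` for all `a ∈ T`. -/
def IsLeftSimpleSub {S : Type*} [Semigroup S] (T : Set S) : Prop :=
  T.Nonempty ∧ (∀ a ∈ T, ∀ b ∈ T, a * b ∈ T) ∧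
  ∀ a ∈ T, {x : S | ∃ t ∈ T, x = t * a} = T

/-- A left simple fuzzy subsemigroup: every level set `f_t`, `t ∈ (0,1]`,
is a nonempty left simple subsemigroup. -/
def IsLeftSimpleFuzzy {S : Type*} [Semigroup S] (f : S → ℝ) : Prop :=
  FuzzySubsemigroup f ∧
  ∀ t : ℝ, t ∈ Set.Ioc (0:ℝ) 1 → IsLeftSimpleSub {a : S | t ≤ f a}

/-- A completely simple subsemigroup of `S`: a nonempty subsemigroup which is simple
(no proper two-sided ideals) and has a primitive idempotent. -/
def IsCompletelySimpleSub {S : Type*} [Semigroup S] (T : Set S) : Prop :=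
  T.Nonempty ∧ (∀ a ∈ T, ∀ b ∈ T, a * b ∈ T) ∧
  (∀ J : Set S, J ⊆ T → J.Nonempty →
    (∀ t ∈ T, ∀ j ∈ J, t * j ∈ J ∧ j * t ∈ J) → J = T) ∧
  (∃ e ∈ T, e * e = e ∧
    ∀ g ∈ T, g * g = g → e * g = g → g * e = g → g = e)

/-- A completely simple fuzzy subsemigroup. -/
def IsCompletelySimpleFuzzy {S : Type*} [Semigroup S] (f : S → ℝ) : Prop :=
  FuzzySubsemigroup f ∧
  ∀ t : ℝ, t ∈ Set.Ioc (0:ℝ) 1 → IsCompletelySimpleSub {a : S | t ≤ f a}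

/-- A completely regular semigroup: every element lies in a subgroup of `S`. -/
def CompletelyRegular (S : Type*) [Semigroup S] : Prop :=
  ∀ a : S, ∃ G : Set S, a ∈ G ∧ (∀ x ∈ G, ∀ y ∈ G, x * y ∈ G) ∧
    ∃ e ∈ G, (∀ x ∈ G, e * x = x ∧ x * e = x) ∧
      ∀ x ∈ G, ∃ y ∈ G, x * y = e ∧ y * x = e

/-- a subsemigroup `Σ` of `S × [0,1]` satisfying (s-i)–(s-iii) arises
from the fuzzy subsemigroup `f b = sup {y : (b,y) ∈ Σ}`, and `𝔖(S,f) = Σ`. -/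
theorem stmt1 {S : Type*} [Semigroup S] (Sg : Set (S × ℝ))
    (hIcc : ∀ p ∈ Sg, p.2 ∈ Set.Icc (0:ℝ) 1)
    (hmul : ∀ p ∈ Sg, ∀ q ∈ Sg, pmul p q ∈ Sg)
    (hs1 : ∀ b : S, ∃ y : ℝ, (b, y) ∈ Sg)
    (hs2 : ∀ b : S, (b, sSup {y : ℝ | (b, y) ∈ Sg}) ∈ Sg)
    (hs3 : ∀ (b : S) (y : ℝ), y ∈ Set.Icc (0:ℝ) 1 →
      y ≤ sSup {z : ℝ | (b, z) ∈ Sg} → (b, y) ∈ Sg) :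
    FuzzySubsemigroup (fun b : S => sSup {y : ℝ | (b, y) ∈ Sg}) ∧
    fuzzyGraph (fun b : S => sSup {y : ℝ | (b, y) ∈ Sg}) = Sg := by
  set f : S → ℝ := fun b => sSup {y : ℝ | (b, y) ∈ Sg} with hf
  have hbdd : ∀ b : S, BddAbove {y : ℝ | (b, y) ∈ Sg} := fun b =>
    ⟨1, fun y hy => (hIcc _ hy).2⟩
  have hfmem : ∀ b : S, (b, f b) ∈ Sg := hs2
  have hfIcc : ∀ b : S, f b ∈ Set.Icc (0:ℝ) 1 := fun b => hIcc _ (hfmem b)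
  have hle : ∀ p ∈ Sg, p.2 ≤ f p.1 := fun p hp => le_csSup (hbdd p.1) hp
  refine ⟨⟨hfIcc, fun a b => ?_⟩, ?_⟩
  · have := hmul _ (hfmem a) _ (hfmem b)
    exact hle _ this
  · ext p
    constructor
    · rintro ⟨h1, h2⟩
      have := hs3 p.1 p.2 h1 h2
      simpa using this
    · intro hp
      exact ⟨hIcc _ hp, hle _ hp⟩
end

section
/- The map Ψ sending a fuzzy subsemigroup f of S to the subsemigroup 𝔖(S,f) = {(b,y) ∈ S × [0,1] : f(b) ≥ y} is a bijection between the set of fuzzy subsemigroups of S and the set of subsemigroups Σ of S × [0,1] satisfying conditions (s-i), (s-ii), (s-iii). -/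
open Classical Pointwise

/-- The conditions (s-i), (s-ii), (s-iii) on a subsemigroup of `S × [0,1]`. -/
def GoodSigma {S : Type*} [Semigroup S] (Sg : Set (S × ℝ)) : Prop :=
  (∀ p ∈ Sg, p.2 ∈ Set.Icc (0:ℝ) 1) ∧
  (∀ p ∈ Sg, ∀ q ∈ Sg, pmul p q ∈ Sg) ∧
  (∀ b : S, ∃ y : ℝ, (b, y) ∈ Sg) ∧
  (∀ b : S, (b, sSup {y : ℝ | (b, y) ∈ Sg}) ∈ Sg) ∧
  (∀ (b : S) (y : ℝ), y ∈ Set.Icc (0:ℝ) 1 →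
    y ≤ sSup {z : ℝ | (b, z) ∈ Sg} → (b, y) ∈ Sg)

/-- `Ψ : f ↦ 𝔖(S,f)` is a bijection between fuzzy subsemigroups of `S`
and subsemigroups of `S × [0,1]` satisfying (s-i)–(s-iii). -/
theorem stmt2 {S : Type*} [Semigroup S] :
    Set.BijOn (fun f : S → ℝ => fuzzyGraph f)
      {f : S → ℝ | FuzzySubsemigroup f} {Sg : Set (S × ℝ) | GoodSigma Sg} := by
  have key : ∀ f : S → ℝ, FuzzySubsemigroup f → ∀ b : S,
      {y : ℝ | (b, y) ∈ fuzzyGraph f} = Set.Icc 0 (f b) := by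
    intro f hf b
    ext y
    simp only [fuzzyGraph, Set.mem_setOf_eq, Set.mem_Icc]
    constructor
    · rintro ⟨⟨h0, _⟩, h2⟩; exact ⟨h0, h2⟩
    · rintro ⟨h0, h2⟩
      exact ⟨⟨h0, h2.trans (hf.1 b).2⟩, h2⟩
  have sup_eq : ∀ f : S → ℝ, FuzzySubsemigroup f → ∀ b : S,
      sSup {y : ℝ | (b, y) ∈ fuzzyGraph f} = f b := by
    intro f hf b
    rw [key f hf b, csSup_Icc (hf.1 b).1]
  refine ⟨?_, ?_, ?_⟩
  · intro f hf
    simp only [Set.mem_setOf_eq] at hf ⊢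
    refine ⟨fun p hp => hp.1, ?_, ?_, ?_, ?_⟩
    · rintro p ⟨⟨hp0, hp1⟩, hpf⟩ q ⟨⟨hq0, hq1⟩, hqf⟩
      refine ⟨⟨le_min hp0 hq0, (min_le_left _ _).trans hp1⟩, ?_⟩
      exact le_trans (min_le_min hpf hqf) (hf.2 p.1 q.1)
    · exact fun b => ⟨0, ⟨le_refl 0, zero_le_one⟩, (hf.1 b).1⟩
    · intro b
      rw [sup_eq f hf b]
      exact ⟨hf.1 b, le_refl _⟩
    · intro b y hy hle
      rw [sup_eq f hf b] at hle
      exact ⟨hy, hle⟩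
  · intro f hf g hg heq
    simp only [Set.mem_setOf_eq] at hf hg heq
    funext b
    have h1 : (b, f b) ∈ fuzzyGraph g := by rw [← heq]; exact ⟨hf.1 b, le_refl _⟩
    have h2 : (b, g b) ∈ fuzzyGraph f := by rw [heq]; exact ⟨hg.1 b, le_refl _⟩
    exact le_antisymm h1.2 h2.2
  · intro Sg hSg
    simp only [Set.mem_setOf_eq] at hSg
    obtain ⟨hIcc, hmul, hne, hsup, hdown⟩ := hSg
    set f : S → ℝ := fun b => sSup {y : ℝ | (b, y) ∈ Sg} with hfdef
    have hbdd : ∀ b : S, BddAbove {y : ℝ | (b, y) ∈ Sg} :=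
      fun b => ⟨1, fun y hy => (hIcc (b, y) hy).2⟩
    have hfIcc : ∀ b : S, f b ∈ Set.Icc (0:ℝ) 1 := fun b => hIcc (b, f b) (hsup b)
    have hffuzzy : FuzzySubsemigroup f := by
      refine ⟨hfIcc, fun a b => ?_⟩
      have := hmul (a, f a) (hsup a) (b, f b) (hsup b)
      exact le_csSup (hbdd (a * b)) this
    refine ⟨f, hffuzzy, ?_⟩
    simp only [Set.mem_setOf_eq]
    ext p
    constructor
    · rintro ⟨hp1, hp2⟩
      exact hdown p.1 p.2 hp1 hp2
    · intro hp
      exact ⟨hIcc p hp, le_csSup (hbdd p.1) hp⟩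
end

section
/- Let Σ be any subsemigroup of S × [0,1]. Define σ : S → [0,1] by σ(a) = sup{t : (a,t) ∈ Σ} if a is in the first projection of Σ, and σ(a) = 0 otherwise. Then σ is a fuzzy subsemigroup of S, i.e., σ(ab) ≥ min(σ(a), σ(b)) for all a,b ∈ S. -/
open Classical Pointwise

/-- for any subsemigroup `Σ` of `S × [0,1]`, the map
`σ a = sup {t : (a,t) ∈ Σ}` (and `0` off the first projection) is a fuzzy
subsemigroup of `S`. -/
theorem stmt3 {S : Type*} [Semigroup S] (Sg : Set (S × ℝ))
    (hIcc : ∀ p ∈ Sg, p.2 ∈ Set.Icc (0:ℝ) 1)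
    (hmul : ∀ p ∈ Sg, ∀ q ∈ Sg, pmul p q ∈ Sg)
    (σ : S → ℝ)
    (hσ : ∀ a : S, σ a = if ∃ t : ℝ, (a, t) ∈ Sg then sSup {t : ℝ | (a, t) ∈ Sg} else 0) :
    ∀ a b : S, min (σ a) (σ b) ≤ σ (a * b) := by
  intro a b
  rw [hσ a, hσ b, hσ (a * b)]
  have hRHS : (0:ℝ) ≤ if ∃ t : ℝ, (a * b, t) ∈ Sg then sSup {t : ℝ | (a * b, t) ∈ Sg} else 0 := by
    split_ifs with h
    · obtain ⟨t, ht⟩ := h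
      have bdd : BddAbove {t : ℝ | (a * b, t) ∈ Sg} := ⟨1, fun x hx => (hIcc _ hx).2⟩
      exact le_trans (hIcc _ ht).1 (le_csSup bdd ht)
    · exact le_rfl
  by_cases ha : ∃ t : ℝ, (a, t) ∈ Sg
  · by_cases hb : ∃ t : ℝ, (b, t) ∈ Sg
    · obtain ⟨ta, hta⟩ := ha
      obtain ⟨tb, htb⟩ := hb
      have hab : ∃ t : ℝ, (a * b, t) ∈ Sg := ⟨min ta tb, hmul _ hta _ htb⟩
      rw [if_pos (show ∃ t : ℝ, (a, t) ∈ Sg from ⟨ta, hta⟩), if_pos (show ∃ t : ℝ, (b, t) ∈ Sg from ⟨tb, htb⟩), if_pos hab]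
      have bddC : BddAbove {t : ℝ | (a * b, t) ∈ Sg} := ⟨1, fun x hx => (hIcc _ hx).2⟩
      apply le_of_forall_lt
      intro c hc
      rw [lt_min_iff] at hc
      obtain ⟨x, hx, hcx⟩ := exists_lt_of_lt_csSup ⟨ta, hta⟩ hc.1
      obtain ⟨y, hy, hcy⟩ := exists_lt_of_lt_csSup ⟨tb, htb⟩ hc.2
      have hm : (a * b, min x y) ∈ Sg := hmul _ hx _ hy
      calc c < min x y := lt_min hcx hcy
        _ ≤ sSup {t : ℝ | (a * b, t) ∈ Sg} := le_csSup bddC hm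
    · rw [if_neg hb]
      exact le_trans (min_le_right _ _) hRHS
  · rw [if_neg ha]
    exact le_trans (min_le_left _ _) hRHS
end

section
/- Let L be a left ideal of S × [0,1] satisfying: (l-i) π₁(L) = S; (l-ii) for every b ∈ S, (b, sup{y : (b,y) ∈ L}) ∈ L; (l-iii) (b,y) ∈ L whenever y ≤ sup{z : (b,z) ∈ L}. Then f(b) = sup{y : (b,y) ∈ L} defines a fuzzy left ideal of S, and {(b,y) : f(b) ≥ y} = L. -/
open Classical Pointwise

/-- a left ideal `L` of `S × [0,1]` satisfying (l-i)–(l-iii) arises from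
the fuzzy left ideal `f b = sup {y : (b,y) ∈ L}`, and `ℒ(S,f) = L`. -/
theorem stmt6 {S : Type*} [Semigroup S] (L : Set (S × ℝ))
    (hIcc : ∀ p ∈ L, p.2 ∈ Set.Icc (0:ℝ) 1)
    (hleft : ∀ p : S × ℝ, p.2 ∈ Set.Icc (0:ℝ) 1 → ∀ q ∈ L, pmul p q ∈ L)
    (hl1 : ∀ b : S, ∃ y : ℝ, (b, y) ∈ L)
    (hl2 : ∀ b : S, (b, sSup {y : ℝ | (b, y) ∈ L}) ∈ L)
    (hl3 : ∀ (b : S) (y : ℝ), y ∈ Set.Icc (0:ℝ) 1 →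
      y ≤ sSup {z : ℝ | (b, z) ∈ L} → (b, y) ∈ L) :
    FuzzyLeftIdeal (fun b : S => sSup {y : ℝ | (b, y) ∈ L}) ∧
    fuzzyGraph (fun b : S => sSup {y : ℝ | (b, y) ∈ L}) = L := by
  set f : S → ℝ := fun b : S => sSup {y : ℝ | (b, y) ∈ L} with hf
  have hbdd : ∀ b : S, BddAbove {y : ℝ | (b, y) ∈ L} := fun b =>
    ⟨1, fun y hy => (hIcc _ hy).2⟩
  have hfmem : ∀ b : S, f b ∈ Set.Icc (0:ℝ) 1 := fun b => hIcc _ (hl2 b)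
  have hle : ∀ p ∈ L, p.2 ≤ f p.1 := fun p hp => le_csSup (hbdd p.1) hp
  refine ⟨⟨hfmem, fun a b => ?_⟩, ?_⟩
  · have h1 : pmul (a, f b) (b, f b) ∈ L := hleft (a, f b) (hfmem b) _ (hl2 b)
    simpa [pmul] using hle _ h1
  · ext p
    constructor
    · rintro ⟨h1, h2⟩
      have := hl3 p.1 p.2 h1 h2
      simpa using this
    · intro hp
      exact ⟨hIcc _ hp, hle _ hp⟩
end

section
/- The map f ↦ {(b,y) ∈ S × [0,1] : f(b) ≥ y} is a bijection between the set of fuzzy left ideals of S and the set of left ideals L of S × [0,1] satisfying conditions (l-i), (l-ii), (l-iii). -/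
open Classical Pointwise

/-- A left ideal of `S × [0,1]` satisfying conditions (l-i), (l-ii), (l-iii). -/
def GoodLeftIdeal {S : Type*} [Semigroup S] (L : Set (S × ℝ)) : Prop :=
  (∀ p ∈ L, p.2 ∈ Set.Icc (0:ℝ) 1) ∧
  (∀ p : S × ℝ, p.2 ∈ Set.Icc (0:ℝ) 1 → ∀ q ∈ L, pmul p q ∈ L) ∧
  (∀ b : S, ∃ y : ℝ, (b, y) ∈ L) ∧
  (∀ b : S, (b, sSup {y : ℝ | (b, y) ∈ L}) ∈ L) ∧
  (∀ (b : S) (y : ℝ), y ∈ Set.Icc (0:ℝ) 1 →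
    y ≤ sSup {z : ℝ | (b, z) ∈ L} → (b, y) ∈ L)

lemma sSup_graph {S : Type*} [Semigroup S] {f : S → ℝ} (hf : FuzzyLeftIdeal f) (b : S) :
    sSup {y : ℝ | (b, y) ∈ fuzzyGraph f} = f b := by
  have h0 : (0:ℝ) ≤ f b := (hf.1 b).1
  have h1 : f b ≤ 1 := (hf.1 b).2
  apply le_antisymm
  · have hne : Set.Nonempty {y : ℝ | (b, y) ∈ fuzzyGraph f} :=
      ⟨0, ⟨⟨le_refl 0, zero_le_one⟩, h0⟩⟩
    apply csSup_le hne
    intro y hy; exact hy.2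
  · exact le_csSup ⟨1, fun y hy => hy.1.2⟩ ⟨⟨h0, h1⟩, le_refl _⟩

/-- `f ↦ ℒ(S,f)` is a bijection between fuzzy left ideals of `S` and
left ideals of `S × [0,1]` satisfying (l-i)–(l-iii). -/
theorem stmt7 {S : Type*} [Semigroup S] :
    Set.BijOn (fun f : S → ℝ => fuzzyGraph f)
      {f : S → ℝ | FuzzyLeftIdeal f} {L : Set (S × ℝ) | GoodLeftIdeal L} := by
  constructor
  · -- MapsTo
    intro f hf
    obtain ⟨hIcc, hideal⟩ := hf
    refine ⟨fun p hp => hp.1, ?_, ?_, ?_, ?_⟩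
    · intro p hp q hq
      refine ⟨⟨le_min hp.1 hq.1.1, min_le_of_right_le hq.1.2⟩, ?_⟩
      calc min p.2 q.2 ≤ q.2 := min_le_right _ _
        _ ≤ f q.1 := hq.2
        _ ≤ f (p.1 * q.1) := hideal _ _
    · intro b
      exact ⟨0, show (0:ℝ) ∈ Set.Icc (0:ℝ) 1 ∧ (0:ℝ) ≤ f b from ⟨⟨le_refl 0, zero_le_one⟩, (hIcc b).1⟩⟩
    · intro b
      rw [sSup_graph ⟨hIcc, hideal⟩ b]
      exact ⟨hIcc b, le_refl _⟩
    · intro b y hy hle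
      rw [sSup_graph ⟨hIcc, hideal⟩ b] at hle
      exact ⟨hy, hle⟩
  constructor
  · -- InjOn
    intro f hf g hg h
    funext b
    have h' : fuzzyGraph f = fuzzyGraph g := h
    have h1 : (b, f b) ∈ fuzzyGraph g := h' ▸ (⟨hf.1 b, le_refl _⟩ : (b, f b) ∈ fuzzyGraph f)
    have h2 : (b, g b) ∈ fuzzyGraph f := h'.symm ▸ (⟨hg.1 b, le_refl _⟩ : (b, g b) ∈ fuzzyGraph g)
    exact le_antisymm h1.2 h2.2
  · -- SurjOn
    intro L hL
    obtain ⟨hIcc, hideal, hne, hsup, hdown⟩ := hL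
    set f : S → ℝ := fun b => sSup {y : ℝ | (b, y) ∈ L} with hfdef
    have hfIcc : ∀ b : S, f b ∈ Set.Icc (0:ℝ) 1 := fun b => hIcc _ (hsup b)
    have hbdd : ∀ b : S, BddAbove {y : ℝ | (b, y) ∈ L} :=
      fun b => ⟨1, fun y hy => (hIcc _ hy).2⟩
    have hfli : FuzzyLeftIdeal f := by
      refine ⟨hfIcc, fun a b => ?_⟩
      have hmem : (a * b, f b) ∈ L := by
        have := hideal (a, 1) ⟨zero_le_one, le_refl 1⟩ (b, f b) (hsup b)
        simpa [pmul, min_eq_right (hfIcc b).2] using this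
      exact le_csSup (hbdd _) hmem
    refine ⟨f, hfli, ?_⟩
    ext ⟨b, y⟩
    constructor
    · intro hp
      exact hdown b y hp.1 hp.2
    · intro hp
      exact ⟨hIcc _ hp, le_csSup (hbdd b) hp⟩
end

section
/- If q is a fuzzy quasi-ideal of a semigroup S, then 𝔔(S,q) = {(a,x) ∈ S × [0,1] : q(a) ≥ x} is a quasi-ideal of the semigroup S × [0,1], i.e., 𝔔(S,q)·(S×[0,1]) ∩ (S×[0,1])·𝔔(S,q) ⊆ 𝔔(S,q). -/
open Classical Pointwise

/-- `𝔔(S,q)` is a quasi-ideal of `S × [0,1]`: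
`𝔔(S,q)·(S×[0,1]) ∩ (S×[0,1])·𝔔(S,q) ⊆ 𝔔(S,q)`. -/
theorem stmt9 {S : Type*} [Semigroup S] (q : S → ℝ) (hq : FuzzyQuasiIdeal q) :
    ∀ r : S × ℝ,
      (∃ p ∈ fuzzyGraph q, ∃ s : S × ℝ, s.2 ∈ Set.Icc (0:ℝ) 1 ∧ r = pmul p s) →
      (∃ s : S × ℝ, s.2 ∈ Set.Icc (0:ℝ) 1 ∧ ∃ p ∈ fuzzyGraph q, r = pmul s p) →
      r ∈ fuzzyGraph q := by
  rintro ⟨a, x⟩ ⟨⟨b, y⟩, ⟨hy01, hyq⟩, ⟨c, z⟩, hz01, hr1⟩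
    ⟨⟨c', z'⟩, hz'01, ⟨b', y'⟩, ⟨hy'01, hy'q⟩, hr2⟩
  simp only [pmul, Prod.mk.injEq] at hr1 hr2
  obtain ⟨ha1, hx1⟩ := hr1
  obtain ⟨ha2, hx2⟩ := hr2
  have hbdd : ∀ (f g : S → ℝ), (∀ s, f s ≤ 1) → (∀ s, g s ≤ 1) →
      BddAbove {x : ℝ | ∃ u v : S, a = u * v ∧ x = min (f u) (g v)} := by
    intro f g hf hg
    refine ⟨1, ?_⟩
    rintro t ⟨u, v, -, rfl⟩
    exact le_trans (min_le_left _ _) (hf u)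
  have hq1 : ∀ s, q s ≤ 1 := fun s => (hq.1 s).2
  have h1 : q b ≤ fComp q (fuzzyOne S) a := by
    apply le_csSup (hbdd q (fuzzyOne S) hq1 (fun _ => le_refl 1))
    exact ⟨b, c, ha1, by simp [fuzzyOne, min_eq_left (hq1 b)]⟩
  have h2 : q b' ≤ fComp (fuzzyOne S) q a := by
    apply le_csSup (hbdd (fuzzyOne S) q (fun _ => le_refl 1) hq1)
    exact ⟨c', b', ha2, by simp [fuzzyOne, min_eq_right (hq1 b')]⟩
  have hqa : min (q b) (q b') ≤ q a :=
    le_trans (min_le_min h1 h2) (hq.2 a)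
  constructor
  · constructor
    · rw [hx1]; exact le_min hy01.1 hz01.1
    · rw [hx1]; exact le_trans (min_le_left _ _) hy01.2
  · calc x ≤ min y y' := by
          refine le_min ?_ ?_
          · rw [hx1]; exact min_le_left _ _
          · rw [hx2]; exact min_le_right _ _
      _ ≤ min (q b) (q b') := min_le_min hyq hy'q
      _ ≤ q a := hqa
end

section
/- A semigroup S is regular if and only if for every fuzzy right ideal f and every fuzzy left ideal g of S, f ∩ g = f ∘ g (i.e., min(f(a),g(a)) = (f∘g)(a) for all a ∈ S). -/
open Classical Pointwise

/-- `S` is regular iff for every fuzzy right ideal `f` and fuzzy left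
ideal `g`, `f ∩ g = f ∘ g`. -/
theorem stmt12 {S : Type*} [Semigroup S] :
    (∀ a : S, ∃ a' : S, a * a' * a = a) ↔
    ∀ f g : S → ℝ, FuzzyRightIdeal f → FuzzyLeftIdeal g →
      ∀ a : S, min (f a) (g a) = fComp f g a := by
  constructor
  · intro hreg f g hf hg a
    obtain ⟨a', ha⟩ := hreg a
    have hbdd : BddAbove {x : ℝ | ∃ b c : S, a = b * c ∧ x = min (f b) (g c)} := by
      refine ⟨1, ?_⟩
      rintro x ⟨b, c, _, rfl⟩
      exact le_trans (min_le_left _ _) (hf.1 b).2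
    apply le_antisymm
    · have hx : min (f (a * a')) (g a) ∈
          {x : ℝ | ∃ b c : S, a = b * c ∧ x = min (f b) (g c)} :=
        ⟨a * a', a, ha.symm, rfl⟩
      calc min (f a) (g a) ≤ min (f (a * a')) (g a) := min_le_min (hf.2 a a') le_rfl
        _ ≤ _ := le_csSup hbdd hx
    · apply Real.sSup_le
      · rintro x ⟨b, c, rfl, rfl⟩
        exact min_le_min (hf.2 b c) (hg.2 b c)
      · exact le_min (hf.1 a).1 (hg.1 a).1
  · intro h a
    classical
    set R : Set S := {x | x = a ∨ ∃ s, x = a * s} with hRdef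
    set L : Set S := {x | x = a ∨ ∃ s, x = s * a} with hLdef
    have chimem : ∀ (A : Set S) (x : S), x ∈ A → chi A x = 1 := by
      intro A x hx; exact Set.indicator_of_mem hx _
    have chinot : ∀ (A : Set S) (x : S), x ∉ A → chi A x = 0 := by
      intro A x hx; exact Set.indicator_of_notMem hx _
    have hchi : ∀ (A : Set S) (x : S), chi A x ∈ Set.Icc (0:ℝ) 1 := by
      intro A x
      by_cases hx : x ∈ A
      · rw [chimem A x hx]; norm_num
      · rw [chinot A x hx]; norm_num
    have hmemR : ∀ {x y : S}, x ∈ R → x * y ∈ R := by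
      rintro x y (rfl | ⟨s, rfl⟩)
      · exact Or.inr ⟨y, rfl⟩
      · exact Or.inr ⟨s * y, mul_assoc _ _ _⟩
    have hmemL : ∀ {x y : S}, y ∈ L → x * y ∈ L := by
      rintro x y (rfl | ⟨s, rfl⟩)
      · exact Or.inr ⟨x, rfl⟩
      · exact Or.inr ⟨x * s, (mul_assoc _ _ _).symm⟩
    have hR : FuzzyRightIdeal (chi R) := by
      refine ⟨fun x => hchi R x, fun x y => ?_⟩
      by_cases hx : x ∈ R
      · rw [chimem R x hx, chimem R (x * y) (hmemR hx)]
      · rw [chinot R x hx]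
        exact (hchi R (x * y)).1
    have hL : FuzzyLeftIdeal (chi L) := by
      refine ⟨fun x => hchi L x, fun x y => ?_⟩
      by_cases hy : y ∈ L
      · rw [chimem L y hy, chimem L (x * y) (hmemL hy)]
      · rw [chinot L y hy]
        exact (hchi L (x * y)).1
    have key := h _ _ hR hL a
    have haR : a ∈ R := Or.inl rfl
    have haL : a ∈ L := Or.inl rfl
    rw [chimem R a haR, chimem L a haL, min_self] at key
    unfold fComp at key
    have hne : {x : ℝ | ∃ b c : S, a = b * c ∧ x = min (chi R b) (chi L c)}.Nonempty := by
      by_contra hno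
      rw [Set.not_nonempty_iff_eq_empty] at hno
      rw [hno, Real.sSup_empty] at key
      norm_num at key
    have hlt : (1:ℝ)/2 < sSup {x : ℝ | ∃ b c : S, a = b * c ∧ x = min (chi R b) (chi L c)} := by
      rw [← key]; norm_num
    obtain ⟨x, hxmem, hxlt⟩ := exists_lt_of_lt_csSup hne hlt
    obtain ⟨b, c, habc, rfl⟩ := hxmem
    have hbR : b ∈ R := by
      by_contra hb
      rw [chinot R b hb] at hxlt
      have : min (0:ℝ) (chi L c) ≤ 0 := min_le_left _ _
      linarith
    have hcL : c ∈ L := by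
      by_contra hc
      rw [chinot L c hc] at hxlt
      have : min (chi R b) (0:ℝ) ≤ 0 := min_le_right _ _
      linarith
    rcases hbR with hb | ⟨s, hb⟩ <;> rcases hcL with hc | ⟨t, hc⟩
    · rw [hb, hc] at habc
      exact ⟨a, by rw [mul_assoc, ← habc, ← habc]⟩
    · rw [hb, hc] at habc
      exact ⟨t, by rw [mul_assoc, ← habc]⟩
    · rw [hb, hc] at habc
      exact ⟨s, habc.symm⟩
    · rw [hb, hc] at habc
      refine ⟨s * t, ?_⟩
      calc a * (s * t) * a = a * s * (t * a) := by simp only [mul_assoc]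
        _ = a := habc.symm
end

section
/- If S is a regular semigroup, then for every fuzzy right ideal f of S, f ∘ f = f, and for every fuzzy left ideal g of S, g ∘ g = g. -/
open Classical Pointwise

/-- in a regular semigroup, `f ∘ f = f` for every fuzzy right ideal `f`
and `g ∘ g = g` for every fuzzy left ideal `g`. -/
theorem stmt13 {S : Type*} [Semigroup S] (hreg : ∀ a : S, ∃ a' : S, a * a' * a = a) :
    (∀ f : S → ℝ, FuzzyRightIdeal f → fComp f f = f) ∧
    (∀ g : S → ℝ, FuzzyLeftIdeal g → fComp g g = g) := by
  constructor
  · intro f hf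
    funext a
    apply le_antisymm
    · apply Real.sSup_le
      · rintro x ⟨b, c, rfl, rfl⟩
        exact le_trans (min_le_left _ _) (hf.2 b c)
      · exact (hf.1 a).1
    · apply le_csSup
      · refine ⟨1, ?_⟩
        rintro x ⟨b, c, _, rfl⟩
        exact le_trans (min_le_left _ _) (hf.1 b).2
      · obtain ⟨a', ha'⟩ := hreg a
        refine ⟨a * a', a, by rw [ha'], ?_⟩
        have h1 : f a ≤ f (a * a') := hf.2 a a'
        simp [min_eq_right h1]
  · intro g hg
    funext a
    apply le_antisymm
    · apply Real.sSup_le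
      · rintro x ⟨b, c, rfl, rfl⟩
        exact le_trans (min_le_right _ _) (hg.2 b c)
      · exact (hg.1 a).1
    · apply le_csSup
      · refine ⟨1, ?_⟩
        rintro x ⟨b, c, _, rfl⟩
        exact le_trans (min_le_left _ _) (hg.1 b).2
      · obtain ⟨a', ha'⟩ := hreg a
        refine ⟨a, a' * a, by rw [← mul_assoc, ha'], ?_⟩
        have h1 : g a ≤ g (a' * a) := hg.2 a' a
        simp [min_eq_left h1]
end

section
/- If S is a regular semigroup, then for every fuzzy quasi-ideal q of S, q ∘ S ∘ q = q, where S denotes the constant fuzzy subset with value 1. -/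
open Classical Pointwise

/-- in a regular semigroup, `q ∘ S ∘ q = q` for every fuzzy
quasi-ideal `q`. -/
theorem stmt14 {S : Type*} [Semigroup S] (hreg : ∀ a : S, ∃ a' : S, a * a' * a = a) :
    ∀ q : S → ℝ, FuzzyQuasiIdeal q → fComp (fComp q (fuzzyOne S)) q = q := by
  intro q hq
  obtain ⟨hq01, hqi⟩ := hq
  -- boundedness of the relevant sets
  have hbO : ∀ a : S, BddAbove
      {x : ℝ | ∃ b c : S, a = b * c ∧ x = min (fComp q (fuzzyOne S) b) (q c)} := by
    intro a
    refine ⟨1, ?_⟩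
    rintro x ⟨b, c, hbc, rfl⟩
    exact le_trans (min_le_right _ _) (hq01 c).2
  have hbR : ∀ a : S, BddAbove
      {x : ℝ | ∃ b c : S, a = b * c ∧ x = min (q b) (fuzzyOne S c)} := by
    intro a
    refine ⟨1, ?_⟩
    rintro x ⟨b, c, hbc, rfl⟩
    exact le_trans (min_le_left _ _) (hq01 b).2
  have hbL : ∀ a : S, BddAbove
      {x : ℝ | ∃ b c : S, a = b * c ∧ x = min (fuzzyOne S b) (q c)} := by
    intro a
    refine ⟨1, ?_⟩
    rintro x ⟨b, c, hbc, rfl⟩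
    exact le_trans (min_le_right _ _) (hq01 c).2
  funext a
  apply le_antisymm
  · -- q ∘ S ∘ q ≤ q
    apply Real.sSup_le
    · rintro x ⟨b, c, hbc, rfl⟩
      have h1 : fComp q (fuzzyOne S) b ≤ fComp q (fuzzyOne S) a := by
        apply Real.sSup_le
        · rintro y ⟨d, e, hde, rfl⟩
          exact le_csSup (hbR a) ⟨d, e * c, by rw [hbc, hde, mul_assoc], rfl⟩
        · -- 0 ≤ fComp q (fuzzyOne S) a
          have : (0:ℝ) ≤ min (q b) (fuzzyOne S c) :=
            le_min (hq01 b).1 zero_le_one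
          exact le_trans this (le_csSup (hbR a) ⟨b, c, hbc, rfl⟩)
      have h2 : q c ≤ fComp (fuzzyOne S) q a :=
        le_csSup (hbL a) ⟨b, c, hbc, (min_eq_right (hq01 c).2).symm⟩
      calc min (fComp q (fuzzyOne S) b) (q c)
          ≤ min (fComp q (fuzzyOne S) a) (fComp (fuzzyOne S) q a) :=
            min_le_min h1 h2
        _ ≤ q a := hqi a
    · exact (hq01 a).1
  · -- q ≤ q ∘ S ∘ q
    obtain ⟨a', ha'⟩ := hreg a
    have h1 : q a ≤ fComp q (fuzzyOne S) (a * a') :=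
      le_csSup (hbR (a * a')) ⟨a, a', rfl, (min_eq_left (hq01 a).2).symm⟩
    have h2 : min (fComp q (fuzzyOne S) (a * a')) (q a) ∈
        {x : ℝ | ∃ b c : S, a = b * c ∧ x = min (fComp q (fuzzyOne S) b) (q c)} :=
      ⟨a * a', a, ha'.symm, rfl⟩
    exact le_trans (le_min h1 le_rfl) (le_csSup (hbO a) h2)
end

section
/- If q₁ and q₂ are fuzzy quasi-ideals of a regular semigroup S, then q₁ ∘ q₂ is a fuzzy quasi-ideal of S. -/
open Classical Pointwise

lemma fComp_le_one {S : Type*} [Semigroup S] {f g : S → ℝ} (hf : ∀ a, f a ≤ 1) (a : S) :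
    fComp f g a ≤ 1 := by
  apply Real.sSup_le _ zero_le_one
  rintro x ⟨b, c, -, rfl⟩
  exact le_trans (min_le_left _ _) (hf b)

lemma fComp_nonneg {S : Type*} [Semigroup S] {f g : S → ℝ} (hf : ∀ a, 0 ≤ f a)
    (hg : ∀ a, 0 ≤ g a) (a : S) : 0 ≤ fComp f g a := by
  apply Real.sSup_nonneg
  rintro x ⟨b, c, -, rfl⟩
  exact le_min (hf b) (hg c)

lemma le_fComp {S : Type*} [Semigroup S] {f g : S → ℝ} (hf : ∀ a, f a ≤ 1) {a b c : S}
    (h : a = b * c) : min (f b) (g c) ≤ fComp f g a := by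
  apply le_csSup
  · exact ⟨1, by rintro x ⟨b', c', -, rfl⟩; exact le_trans (min_le_left _ _) (hf b')⟩
  · exact ⟨b, c, h, rfl⟩

/-- in a regular semigroup, the composition of two fuzzy quasi-ideals
is a fuzzy quasi-ideal. -/
theorem stmt15 {S : Type*} [Semigroup S] (hreg : ∀ a : S, ∃ a' : S, a * a' * a = a)
    (q₁ q₂ : S → ℝ) (h₁ : FuzzyQuasiIdeal q₁) (h₂ : FuzzyQuasiIdeal q₂) :
    FuzzyQuasiIdeal (fComp q₁ q₂) := by
  have hq₁0 : ∀ a, 0 ≤ q₁ a := fun a => (h₁.1 a).1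
  have hq₁1 : ∀ a, q₁ a ≤ 1 := fun a => (h₁.1 a).2
  have hq₂0 : ∀ a, 0 ≤ q₂ a := fun a => (h₂.1 a).1
  have hq₂1 : ∀ a, q₂ a ≤ 1 := fun a => (h₂.1 a).2
  have hQ0 : ∀ a, 0 ≤ fComp q₁ q₂ a := fComp_nonneg hq₁0 hq₂0
  have hQ1 : ∀ a, fComp q₁ q₂ a ≤ 1 := fComp_le_one hq₁1
  constructor
  · exact fun a => ⟨hQ0 a, hQ1 a⟩
  · intro a
    refine le_of_forall_lt fun t ht => ?_
    rcases lt_or_ge t 0 with ht0 | ht0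
    · exact lt_of_lt_of_le ht0 (hQ0 a)
    have htA := lt_of_lt_of_le ht (min_le_left _ _)
    have htB := lt_of_lt_of_le ht (min_le_right _ _)
    have ht1 : t < 1 := lt_of_lt_of_le htA (fComp_le_one hQ1 a)
    have hne : ∀ (f g : S → ℝ) (x : S), t < fComp f g x →
        {r : ℝ | ∃ b c : S, x = b * c ∧ r = min (f b) (g c)}.Nonempty := by
      intro f g x hx
      rcases Set.eq_empty_or_nonempty {r : ℝ | ∃ b c : S, x = b * c ∧ r = min (f b) (g c)}
        with h | h
      · exfalso; rw [fComp, h, Real.sSup_empty] at hx; exact absurd hx (not_lt.mpr ht0)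
      · exact h
    obtain ⟨x, ⟨u, v, hauv, rfl⟩, hx⟩ := exists_lt_of_lt_csSup (hne _ _ _ htA) htA
    have htu : t < fComp q₁ q₂ u := lt_of_lt_of_le hx (min_le_left _ _)
    obtain ⟨x, ⟨b, c, hubc, rfl⟩, hbc⟩ := exists_lt_of_lt_csSup (hne _ _ _ htu) htu
    obtain ⟨x, ⟨w, z, hawz, rfl⟩, hx'⟩ := exists_lt_of_lt_csSup (hne _ _ _ htB) htB
    have htz : t < fComp q₁ q₂ z := lt_of_lt_of_le hx' (min_le_right _ _)
    obtain ⟨x, ⟨e, y, hzey, rfl⟩, hey⟩ := exists_lt_of_lt_csSup (hne _ _ _ htz) htz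
    have htb : t < q₁ b := lt_of_lt_of_le hbc (min_le_left _ _)
    have hte : t < q₁ e := lt_of_lt_of_le hey (min_le_left _ _)
    have hty : t < q₂ y := lt_of_lt_of_le hey (min_le_right _ _)
    obtain ⟨a', ha'⟩ := hreg a
    set m : S := b * c * v * a' * w * e with hm
    have ham : a = m * y := by
      have h0 : a = ((b * c) * v) * a' * (w * (e * y)) := by
        rw [← hubc, ← hzey, ← hauv, ← hawz, ha']
      rw [h0, hm]
      simp only [mul_assoc]
    have h1m : t < q₁ m := by
      refine lt_of_lt_of_le ?_ (h₁.2 m)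
      refine lt_min (lt_of_lt_of_le ?_ (le_fComp hq₁1 (show m = b * (c * (v * (a' * (w * e))))
          by rw [hm]; simp only [mul_assoc]))) (lt_of_lt_of_le ?_
          (le_fComp (f := fuzzyOne S) (fun _ => le_refl 1) hm))
      · exact lt_min htb (by simpa [fuzzyOne] using ht1)
      · exact lt_min (by simpa [fuzzyOne] using ht1) hte
    exact lt_of_lt_of_le (lt_min h1m hty) (le_fComp hq₁1 ham)
end

section
/- If S is a fuzzy semilattice of fuzzy subsemigroups f_α (α ∈ Y), then the family of subsemigroups f_{(α,t)} = (f_α)_t × {t} for (α,t) ∈ Y × (0,1] forms a semilattice decomposition of the semigroup S × (0,1] indexed by the semilattice Y × ((0,1], min): the f_{(α,t)} are pairwise disjoint nonempty subsemigroups whose union is S × (0,1], and f_{(α,t)} f_{(β,t')} ⊆ f_{(α·β, min(t,t'))}. -/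
open Classical Pointwise

/-- if `S` is a fuzzy semilattice of fuzzy subsemigroups `f_α` (`α ∈ Y`),
then the pieces `f_{(α,t)} = (f_α)_t × {t}`, for `(α,t) ∈ Y × (0,1]`, form a semilattice
decomposition of `S × (0,1]` indexed by `Y × ((0,1], min)`. -/
theorem stmt17 {Y S : Type*} [Semigroup Y] [Semigroup S]
    (hcomm : ∀ α β : Y, α * β = β * α) (hidem : ∀ α : Y, α * α = α)
    (f : Y → S → ℝ) (hf : IsFuzzySemilattice f)
    (piece : Y → ℝ → Set (S × ℝ))
    (hpiece : ∀ (α : Y) (t : ℝ), piece α t = {p : S × ℝ | p.2 = t ∧ t ≤ f α p.1}) :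
    (∀ (α : Y) (t : ℝ), t ∈ Set.Ioc (0:ℝ) 1 → (piece α t).Nonempty) ∧
    (∀ (α : Y) (t : ℝ), t ∈ Set.Ioc (0:ℝ) 1 →
      ∀ p ∈ piece α t, ∀ q ∈ piece α t, pmul p q ∈ piece α t) ∧
    (∀ (α β : Y) (t t' : ℝ), t ∈ Set.Ioc (0:ℝ) 1 → t' ∈ Set.Ioc (0:ℝ) 1 →
      (α, t) ≠ (β, t') → Disjoint (piece α t) (piece β t')) ∧
    (∀ p : S × ℝ, p.2 ∈ Set.Ioc (0:ℝ) 1 →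
      ∃ (α : Y) (t : ℝ), t ∈ Set.Ioc (0:ℝ) 1 ∧ p ∈ piece α t) ∧
    (∀ (α β : Y) (t t' : ℝ), t ∈ Set.Ioc (0:ℝ) 1 → t' ∈ Set.Ioc (0:ℝ) 1 →
      ∀ p ∈ piece α t, ∀ q ∈ piece β t', pmul p q ∈ piece (α * β) (min t t')) := by
  obtain ⟨hsub, hdisj, hcmp, hlev, hcov⟩ := hf
  refine ⟨?_, ?_, ?_, ?_, ?_⟩
  · intro α t ht
    obtain ⟨a, ha⟩ := hlev α t ht
    exact ⟨(a, t), by simp [hpiece, ha]⟩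
  · intro α t ht p hp q hq
    rw [hpiece] at hp hq ⊢
    refine ⟨by simp [pmul, hp.1, hq.1], ?_⟩
    have := (hsub α).2 p.1 q.1
    have h2 : t ≤ min (f α p.1) (f α q.1) := le_min hp.2 hq.2
    exact h2.trans this
  · intro α β t t' ht ht' hne
    rw [Set.disjoint_left]
    intro p hp hq
    rw [hpiece] at hp hq
    by_cases htt : t = t'
    · subst htt
      have hab : α ≠ β := fun h => hne (by rw [h])
      have hz := hdisj α β hab p.1
      have h2 : t ≤ min (f α p.1) (f β p.1) := le_min hp.2 hq.2
      rw [hz] at h2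
      linarith [ht.1]
    · exact htt (hp.1 ▸ hq.1)
  · intro p hp
    obtain ⟨α, hα⟩ := hcov p.1 p.2 hp
    exact ⟨α, p.2, hp, by simp [hpiece, hα]⟩
  · intro α β t t' ht ht' p hp q hq
    rw [hpiece] at hp hq ⊢
    refine ⟨by simp [pmul, hp.1, hq.1], ?_⟩
    have hm : min t t' ≤ min (f α p.1) (f β q.1) := min_le_min hp.2 hq.2
    have hmem : min (f α p.1) (f β q.1) ∈
        {x : ℝ | ∃ b c : S, p.1 * q.1 = b * c ∧ x = min (f α b) (f β c)} :=
      ⟨p.1, q.1, rfl, rfl⟩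
    have hbdd : BddAbove {x : ℝ | ∃ b c : S, p.1 * q.1 = b * c ∧ x = min (f α b) (f β c)} := by
      refine ⟨1, ?_⟩
      rintro x ⟨b, c, _, rfl⟩
      exact le_trans (min_le_left _ _) ((hsub α).1 b).2
    have hsup : min (f α p.1) (f β q.1) ≤ fComp (f α) (f β) (p.1 * q.1) :=
      le_csSup hbdd hmem
    calc min t t' ≤ fComp (f α) (f β) (p.1 * q.1) := hm.trans hsup
      _ ≤ f (α * β) (p.1 * q.1) := hcmp α β _
end

section
/- A semigroup S is a fuzzy semilattice of left simple fuzzy subsemigroups if and only if S is a semilattice of left simple semigroups. -/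
open Classical Pointwise

lemma chi_mem' {S : Type*} {A : Set S} {a : S} (h : a ∈ A) : chi A a = 1 := by
  simp [chi, Set.indicator_of_mem h]

lemma chi_notMem' {S : Type*} {A : Set S} {a : S} (h : a ∉ A) : chi A a = 0 := by
  simp [chi, Set.indicator_of_notMem h]

lemma chi_nonneg' {S : Type*} (A : Set S) (a : S) : 0 ≤ chi A a := by
  by_cases h : a ∈ A
  · rw [chi_mem' h]; norm_num
  · rw [chi_notMem' h]

lemma chi_le_one' {S : Type*} (A : Set S) (a : S) : chi A a ≤ 1 := by
  by_cases h : a ∈ A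
  · rw [chi_mem' h]
  · rw [chi_notMem' h]; norm_num

/-- `S` is a fuzzy semilattice of left simple fuzzy subsemigroups iff
`S` is a semilattice of left simple semigroups. -/
theorem stmt18 {S : Type} [Semigroup S] :
    (∃ (Y : Type) (_ : Semigroup Y), (∀ α β : Y, α * β = β * α) ∧ (∀ α : Y, α * α = α) ∧
      ∃ f : Y → S → ℝ, IsFuzzySemilattice f ∧ ∀ α : Y, IsLeftSimpleFuzzy (f α)) ↔
    (∃ (Y : Type) (_ : Semigroup Y), (∀ α β : Y, α * β = β * α) ∧ (∀ α : Y, α * α = α) ∧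
      ∃ T : Y → Set S, IsSemilatticeDecomp T ∧ ∀ α : Y, IsLeftSimpleSub (T α)) := by
  constructor
  · rintro ⟨Y, sY, hc, hi, f, ⟨hsub, hdisj, hcomp, hne, hcov⟩, hls⟩
    refine ⟨Y, sY, hc, hi, fun α => {a : S | 1 ≤ f α a}, ⟨?_, ?_, ?_, ?_, ?_⟩, ?_⟩
    · intro α
      obtain ⟨a, ha⟩ := hne α 1 ⟨one_pos, le_refl 1⟩
      exact ⟨a, ha⟩
    · intro α a ha b hb
      exact le_trans (le_min ha hb) ((hsub α).2 a b)
    · intro α β hab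
      rw [Set.disjoint_left]
      intro a ha hb
      have h0 := hdisj α β hab a
      have h1 : (1:ℝ) ≤ min (f α a) (f β a) := le_min ha hb
      rw [h0] at h1; linarith
    · ext a
      simp only [Set.mem_iUnion, Set.mem_univ, iff_true]
      obtain ⟨α, hα⟩ := hcov a 1 ⟨one_pos, le_refl 1⟩
      exact ⟨α, hα⟩
    · intro α β a ha b hb
      have hbdd : BddAbove {x : ℝ | ∃ b' c' : S, a * b = b' * c' ∧ x = min (f α b') (f β c')} := by
        refine ⟨1, ?_⟩
        rintro x ⟨b', c', -, rfl⟩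
        exact le_trans (min_le_left _ _) ((hsub α).1 b').2
      have hmem : min (f α a) (f β b) ∈
          {x : ℝ | ∃ b' c' : S, a * b = b' * c' ∧ x = min (f α b') (f β c')} :=
        ⟨a, b, rfl, rfl⟩
      have h1 : (1:ℝ) ≤ fComp (f α) (f β) (a * b) :=
        le_trans (le_min ha hb) (le_csSup hbdd hmem)
      exact le_trans h1 (hcomp α β (a * b))
    · intro α
      exact (hls α).2 1 ⟨one_pos, le_refl 1⟩
  · rintro ⟨Y, sY, hc, hi, T, ⟨hne, hmul, hdisj, hcov, hprod⟩, hls⟩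
    have hfs : ∀ α : Y, FuzzySubsemigroup (chi (T α)) := by
      intro α
      constructor
      · intro a; exact ⟨chi_nonneg' _ _, chi_le_one' _ _⟩
      · intro a b
        by_cases ha : a ∈ T α
        · by_cases hb : b ∈ T α
          · rw [chi_mem' (hmul α a ha b hb)]
            exact le_trans (min_le_left _ _) (chi_le_one' _ _)
          · rw [chi_notMem' hb]
            exact le_trans (min_le_right _ _) (chi_nonneg' _ _)
        · rw [chi_notMem' ha]
          exact le_trans (min_le_left _ _) (chi_nonneg' _ _)
    refine ⟨Y, sY, hc, hi, fun α => chi (T α), ⟨hfs, ?_, ?_, ?_, ?_⟩, ?_⟩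
    · intro α β hab a
      beta_reduce
      by_cases ha : a ∈ T α
      · have hb : a ∉ T β := fun hb => (hdisj α β hab).le_bot ⟨ha, hb⟩
        rw [chi_notMem' hb]
        exact min_eq_right (chi_nonneg' _ _)
      · rw [chi_notMem' ha]
        exact min_eq_left (chi_nonneg' _ _)
    · intro α β a
      apply Real.sSup_le
      · rintro x ⟨b, c, rfl, rfl⟩
        beta_reduce
        by_cases hb : b ∈ T α
        · by_cases hcc : c ∈ T β
          · rw [chi_mem' (hprod α β b hb c hcc)]
            exact le_trans (min_le_left _ _) (chi_le_one' _ _)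
          · rw [chi_notMem' hcc]
            exact le_trans (min_le_right _ _) (chi_nonneg' _ _)
        · rw [chi_notMem' hb]
          exact le_trans (min_le_left _ _) (chi_nonneg' _ _)
      · exact chi_nonneg' _ _
    · intro α t ht
      obtain ⟨a, ha⟩ := hne α
      exact ⟨a, by beta_reduce; rw [chi_mem' ha]; exact ht.2⟩
    · intro a t ht
      have : a ∈ ⋃ α : Y, T α := by rw [hcov]; trivial
      obtain ⟨α, hα⟩ := Set.mem_iUnion.mp this
      exact ⟨α, by beta_reduce; rw [chi_mem' hα]; exact ht.2⟩
    · intro α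
      refine ⟨hfs α, ?_⟩
      intro t ht
      have hset : {a : S | t ≤ chi (T α) a} = T α := by
        ext a
        constructor
        · intro h
          by_contra hna
          rw [Set.mem_setOf_eq, chi_notMem' hna] at h
          linarith [ht.1]
        · intro h
          rw [Set.mem_setOf_eq, chi_mem' h]
          exact ht.2
      rw [hset]
      exact hls α
end

section
/- Every completely regular semigroup S is a fuzzy semilattice of completely simple fuzzy subsemigroups. -/
open Classical Pointwise

section CRHelpers

variable {S : Type} [Semigroup S]

/-- Divisibility quasi-order: `a ∈ S b S`. -/
def rdiv (a b : S) : Prop := ∃ u v : S, a = u * b * v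

lemma rdiv_trans {a b c : S} (h1 : rdiv a b) (h2 : rdiv b c) : rdiv a c := by
  obtain ⟨u, v, rfl⟩ := h1
  obtain ⟨p, q, rfl⟩ := h2
  exact ⟨u * p, q * v, by simp only [mul_assoc]⟩

lemma cr_inv (h : CompletelyRegular S) (a : S) :
    ∃ y : S, a * (y * a) = a ∧ y * (a * y) = y ∧ a * y = y * a := by
  obtain ⟨G, haG, _hmul, e, heG, hid, hinv⟩ := h a
  obtain ⟨y, hyG, hay, hya⟩ := hinv a haG
  refine ⟨y, ?_, ?_, ?_⟩
  · rw [hya, (hid a haG).2]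
  · rw [hay, (hid y hyG).2]
  · rw [hay, hya]

lemma rdiv_refl (h : CompletelyRegular S) (a : S) : rdiv a a := by
  obtain ⟨y, A, _B, _C⟩ := cr_inv h a
  exact ⟨a * y, y * a, by simp only [mul_assoc, A]⟩

lemma rdiv_mul_left (h : CompletelyRegular S) (x w : S) : rdiv (x * w) w := by
  obtain ⟨y, A, _B, _C⟩ := cr_inv h w
  exact ⟨x * (w * y), y * w, by simp only [mul_assoc, A]⟩

lemma rdiv_mul_right (h : CompletelyRegular S) (w x : S) : rdiv (w * x) w := by
  obtain ⟨y, A, _B, _C⟩ := cr_inv h w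
  have A2 : ∀ z : S, w * (y * (w * z)) = w * z := by
    intro z
    calc w * (y * (w * z)) = (w * (y * w)) * z := by simp only [mul_assoc]
      _ = w * z := by rw [A]
  exact ⟨w * y, y * (w * x), by simp only [mul_assoc, A2]⟩

lemma rdiv_sq_left (h : CompletelyRegular S) (a : S) : rdiv (a * a) a := by
  obtain ⟨y, A, _B, _C⟩ := cr_inv h a
  have A2 : ∀ z : S, a * (y * (a * z)) = a * z := by
    intro z
    calc a * (y * (a * z)) = (a * (y * a)) * z := by simp only [mul_assoc]
      _ = a * z := by rw [A]
  exact ⟨a * y, a, by simp only [mul_assoc, A2]⟩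

lemma rdiv_sq_right (h : CompletelyRegular S) (a : S) : rdiv a (a * a) := by
  obtain ⟨y, A, _B, C⟩ := cr_inv h a
  refine ⟨y, y * a, ?_⟩
  have key : y * (a * a) * (y * a) = a := by
    calc y * (a * a) * (y * a) = y * (a * (a * (y * a))) := by simp only [mul_assoc]
      _ = y * (a * a) := by rw [A]
      _ = y * a * a := by rw [mul_assoc]
      _ = a * y * a := by rw [C]
      _ = a * (y * a) := by rw [mul_assoc]
      _ = a := A
  exact key.symm

lemma rdiv_comm (h : CompletelyRegular S) (a b : S) : rdiv (a * b) (b * a) := by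
  refine rdiv_trans (rdiv_sq_right h (a * b)) ⟨a, b, ?_⟩
  simp only [mul_assoc]

lemma rdiv_congr_right (h : CompletelyRegular S) {a b : S} (hab : rdiv a b) (c : S) :
    rdiv (a * c) (b * c) := by
  obtain ⟨u, v, rfl⟩ := hab
  have h1 : rdiv (u * b * v * c) (b * (v * c)) := by
    have e1 : u * b * v * c = u * (b * (v * c)) := by simp only [mul_assoc]
    rw [e1]; exact rdiv_mul_left h u _
  refine rdiv_trans h1 (rdiv_trans (rdiv_comm h b (v * c)) ?_)
  have e2 : (v * c) * b = v * (c * b) := by simp only [mul_assoc]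
  rw [e2]
  exact rdiv_trans (rdiv_mul_left h v (c * b)) (rdiv_comm h c b)

lemma rdiv_congr_left (h : CompletelyRegular S) {a b : S} (hab : rdiv a b) (c : S) :
    rdiv (c * a) (c * b) :=
  rdiv_trans (rdiv_comm h c a) (rdiv_trans (rdiv_congr_right h hab c) (rdiv_comm h b c))

/-- The least semilattice congruence (𝒥 on a completely regular semigroup). -/
def crEqv (a b : S) : Prop := rdiv a b ∧ rdiv b a

lemma crEqv_refl (h : CompletelyRegular S) (a : S) : crEqv a a :=
  ⟨rdiv_refl h a, rdiv_refl h a⟩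

lemma crEqv_symm {a b : S} (hab : crEqv a b) : crEqv b a := ⟨hab.2, hab.1⟩

lemma crEqv_trans {a b c : S} (h1 : crEqv a b) (h2 : crEqv b c) : crEqv a c :=
  ⟨rdiv_trans h1.1 h2.1, rdiv_trans h2.2 h1.2⟩

lemma crEqv_congr (h : CompletelyRegular S) {a1 b1 a2 b2 : S}
    (h1 : crEqv a1 b1) (h2 : crEqv a2 b2) : crEqv (a1 * a2) (b1 * b2) :=
  crEqv_trans ⟨rdiv_congr_right h h1.1 a2, rdiv_congr_right h h1.2 a2⟩
    ⟨rdiv_congr_left h h2.1 b1, rdiv_congr_left h h2.2 b1⟩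

lemma crEqv_comm (h : CompletelyRegular S) (a b : S) : crEqv (a * b) (b * a) :=
  ⟨rdiv_comm h a b, rdiv_comm h b a⟩

lemma crEqv_sq (h : CompletelyRegular S) (a : S) : crEqv (a * a) a :=
  ⟨rdiv_sq_left h a, rdiv_sq_right h a⟩

/-- Key factorization: within a 𝒥-class, `t ∈ T s T`. -/
lemma exists_factor (h : CompletelyRegular S) {s t : S} (hst : crEqv s t) :
    ∃ u v : S, crEqv u t ∧ crEqv v t ∧ t = u * s * v := by
  obtain ⟨x, z, hxz⟩ := hst.2
  obtain ⟨p, At, _Bt, Ct⟩ := cr_inv h t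
  obtain ⟨q, As, _Bs, _Cs⟩ := cr_inv h s
  have As2 : ∀ w : S, s * (q * (s * w)) = s * w := by
    intro w
    calc s * (q * (s * w)) = (s * (q * s)) * w := by simp only [mul_assoc]
      _ = s * w := by rw [As]
  set U := p * (t * (x * (s * q))) with hU
  set V := z * (t * p) with hV
  have ht : t = U * s * V := by
    have e1 : U * s * V = p * (t * (x * (s * (q * (s * (z * (t * p))))))) := by
      rw [hU, hV]; simp only [mul_assoc]
    rw [e1, As2]
    -- goal : t = p * (t * (x * (s * (z * (t * p)))))
    have e2 : x * (s * (z * (t * p))) = t * (t * p) := by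
      have : x * s * z = t := hxz.symm
      calc x * (s * (z * (t * p))) = (x * s * z) * (t * p) := by simp only [mul_assoc]
        _ = t * (t * p) := by rw [this]
    rw [e2]
    -- goal : t = p * (t * (t * (t * p)))
    have e3 : t * (t * p) = t := by rw [show t * p = p * t from Ct, At]
    rw [e3]
    -- goal : t = p * (t * t)
    calc t = t * (p * t) := At.symm
      _ = t * p * t := by rw [mul_assoc]
      _ = p * t * t := by rw [Ct]
      _ = p * (t * t) := by rw [mul_assoc]
  have hUs : rdiv U s := ⟨p * (t * x), q, by rw [hU]; simp only [mul_assoc]⟩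
  have hUt : rdiv U t := rdiv_trans hUs hst.1
  have htU : rdiv t U := by
    refine rdiv_trans (rdiv_sq_right h t) ⟨t, s * V, ?_⟩
    calc t * t = t * (U * s * V) := by rw [← ht]
      _ = t * U * (s * V) := by simp only [mul_assoc]
  have hVt : rdiv V t := ⟨z, p, by rw [hV]; simp only [mul_assoc]⟩
  have htV : rdiv t V := by
    refine rdiv_trans (rdiv_sq_right h t) ⟨U * s, t, ?_⟩
    calc t * t = (U * s * V) * t := by rw [← ht]
      _ = U * s * V * t := rfl
  exact ⟨U, V, ⟨hUt, htU⟩, ⟨hVt, htV⟩, ht⟩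

/-- An idempotent dividing an idempotent below it equals it: primitivity. -/
lemma prim_key (h : CompletelyRegular S) {e g : S} (hee : e * e = e) (hgg : g * g = g)
    (heg : e * g = g) (hge : g * e = g) (hr : rdiv e g) : e = g := by
  obtain ⟨a0, b0, hE⟩ := hr
  set a := e * a0 * g with ha
  set b := g * b0 * e with hb
  have hag : a * g = a := by
    rw [ha]; calc e * a0 * g * g = e * a0 * (g * g) := by rw [mul_assoc]
      _ = e * a0 * g := by rw [hgg]
  have hE' : a0 * (g * b0) = e := by rw [← mul_assoc, ← hE]
  have hab : a * b = e := by
    rw [ha, hb]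
    calc e * a0 * g * (g * b0 * e) = e * (a0 * ((g * g) * (b0 * e))) := by
          simp only [mul_assoc]
      _ = e * (a0 * (g * (b0 * e))) := by rw [hgg]
      _ = e * ((a0 * (g * b0)) * e) := by simp only [mul_assoc]
      _ = e * (e * e) := by rw [hE']
      _ = e := by rw [hee, hee]
  obtain ⟨y, A, _B, C⟩ := cr_inv h a
  set u := y * a with hu
  have hue : u * e = e := by
    calc u * e = y * a * (a * b) := by rw [hu, hab]
      _ = a * y * (a * b) := by rw [C]
      _ = a * (y * a) * b := by simp only [mul_assoc]
      _ = a * b := by rw [A]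
      _ = e := hab
  have hug : u * g = u := by
    calc u * g = y * (a * g) := by rw [hu, mul_assoc]
      _ = y * a := by rw [hag]
      _ = u := hu.symm
  have heu : e = u := by
    calc e = u * e := hue.symm
      _ = (u * g) * e := by rw [hug]
      _ = u * (g * e) := by rw [mul_assoc]
      _ = u * g := by rw [hge]
      _ = u := hug
  calc e = u := heu
    _ = u * g := hug.symm
    _ = e * g := by rw [← heu]
    _ = g := heg

end CRHelpers

/-- every completely regular semigroup is a fuzzy semilattice of
completely simple fuzzy subsemigroups. -/
theorem stmt19 {S : Type} [Semigroup S] (h : CompletelyRegular S) :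
    ∃ (Y : Type) (_ : Semigroup Y), (∀ α β : Y, α * β = β * α) ∧ (∀ α : Y, α * α = α) ∧
      ∃ f : Y → S → ℝ, IsFuzzySemilattice f ∧
        ∀ α : Y, IsCompletelySimpleFuzzy (f α) := by
  letI st : Setoid S :=
    ⟨crEqv, ⟨crEqv_refl h, fun hab => crEqv_symm hab, fun h1 h2 => crEqv_trans h1 h2⟩⟩
  let Y := Quotient st
  letI instY : Semigroup Y :=
    { mul := Quotient.map₂ (· * ·) (fun _ _ h1 _ _ h2 => crEqv_congr h h1 h2)
      mul_assoc := fun α β γ => by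
        induction α using Quotient.inductionOn with | _ a =>
        induction β using Quotient.inductionOn with | _ b =>
        induction γ using Quotient.inductionOn with | _ c =>
        exact congrArg (Quotient.mk st) (mul_assoc a b c) }
  have mk_mul : ∀ a b : S,
      (Quotient.mk st a) * (Quotient.mk st b) = Quotient.mk st (a * b) := fun _ _ => rfl
  have hclass_mul : ∀ {a b : S} {α : Y}, Quotient.mk st a = α → Quotient.mk st b = α →
      Quotient.mk st (a * b) = α := by
    intro a b α ha hb
    have hab : crEqv a b := Quotient.exact (ha.trans hb.symm)
    have h2 : crEqv (a * b) b :=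
      crEqv_trans (crEqv_congr h hab (crEqv_refl h b)) (crEqv_sq h b)
    exact (Quotient.sound h2).trans hb
  have hcs : ∀ α : Y, IsCompletelySimpleSub {a : S | Quotient.mk st a = α} := by
    intro α
    obtain ⟨s, hs⟩ := Quotient.exists_rep α
    obtain ⟨y, A, B, C⟩ := cr_inv h s
    refine ⟨⟨s, hs⟩, ?_, ?_, ?_⟩
    · intro a ha b hb; exact hclass_mul ha hb
    · intro J hJT hJne hJideal
      refine Set.Subset.antisymm hJT ?_
      intro t ht
      obtain ⟨j, hj⟩ := hJne
      have hjT : Quotient.mk st j = α := hJT hj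
      have hjt : crEqv j t := Quotient.exact (hjT.trans ht.symm)
      obtain ⟨u, v, hut, hvt, htf⟩ := exists_factor h hjt
      have hu : Quotient.mk st u = α := (Quotient.sound hut).trans ht
      have hv : Quotient.mk st v = α := (Quotient.sound hvt).trans ht
      have h1 : u * j ∈ J := (hJideal u hu j hj).1
      have h2 : u * j * v ∈ J := (hJideal v hv (u * j) h1).2
      rw [htf]; exact h2
    · have hes : crEqv (s * y) s := by
        constructor
        · exact ⟨s * y, y, by simp only [mul_assoc, B]⟩
        · exact ⟨s, y * s, by rw [C, A, A]⟩
      have hee : (s * y) * (s * y) = s * y := by simp only [mul_assoc, B]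
      have hsyT : Quotient.mk st (s * y) = α := (Quotient.sound hes).trans hs
      refine ⟨s * y, hsyT, hee, ?_⟩
      intro g hg hgg hegg hgeg
      have hrel : crEqv (s * y) g := Quotient.exact (hsyT.trans hg.symm)
      exact (prim_key h hee hgg hegg hgeg hrel.1).symm
  let f : Y → S → ℝ := fun α a => if Quotient.mk st a = α then 1 else 0
  have f01 : ∀ (α : Y) (a : S), f α a ∈ Set.Icc (0:ℝ) 1 := by
    intro α a
    by_cases hc : Quotient.mk st a = α <;> simp [f, hc]
  have fval1 : ∀ {α : Y} {a : S}, Quotient.mk st a = α → f α a = 1 := by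
    intro α a hc; simp [f, hc]
  have fval0 : ∀ {α : Y} {a : S}, Quotient.mk st a ≠ α → f α a = 0 := by
    intro α a hc; simp [f, hc]
  have hsub : ∀ α : Y, FuzzySubsemigroup (f α) := by
    intro α
    refine ⟨f01 α, ?_⟩
    intro a b
    by_cases ha : Quotient.mk st a = α
    · by_cases hb : Quotient.mk st b = α
      · rw [fval1 ha, fval1 hb, fval1 (hclass_mul ha hb)]; norm_num
      · calc min (f α a) (f α b) ≤ f α b := min_le_right _ _
          _ = 0 := fval0 hb
          _ ≤ f α (a * b) := (f01 α (a * b)).1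
    · calc min (f α a) (f α b) ≤ f α a := min_le_left _ _
        _ = 0 := fval0 ha
        _ ≤ f α (a * b) := (f01 α (a * b)).1
  refine ⟨Y, instY, ?_, ?_, f, ⟨hsub, ?_, ?_, ?_, ?_⟩, ?_⟩
  · intro α β
    induction α using Quotient.inductionOn with | _ a =>
    induction β using Quotient.inductionOn with | _ b =>
    exact Quotient.sound (crEqv_comm h a b)
  · intro α
    induction α using Quotient.inductionOn with | _ a =>
    exact Quotient.sound (crEqv_sq h a)
  · -- disjointness
    intro α β hne a
    by_cases ha : Quotient.mk st a = α
    · have hb : Quotient.mk st a ≠ β := fun hb => hne (ha.symm.trans hb)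
      rw [fval0 hb]
      exact min_eq_right (f01 α a).1
    · rw [fval0 ha]
      exact min_eq_left (f01 β a).1
  · -- fComp
    intro α β a
    refine Real.sSup_le ?_ (f01 (α * β) a).1
    rintro x ⟨b, c, habc, rfl⟩
    by_cases hb : Quotient.mk st b = α
    · by_cases hc : Quotient.mk st c = β
      · have hbc : Quotient.mk st (b * c) = α * β := by rw [← hb, ← hc, mk_mul]
        rw [habc, fval1 hbc, fval1 hb, fval1 hc]; norm_num
      · calc min (f α b) (f β c) ≤ f β c := min_le_right _ _
          _ = 0 := fval0 hc
          _ ≤ f (α * β) a := (f01 (α * β) a).1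
    · calc min (f α b) (f β c) ≤ f α b := min_le_left _ _
        _ = 0 := fval0 hb
        _ ≤ f (α * β) a := (f01 (α * β) a).1
  · intro α t ht
    obtain ⟨s, hs⟩ := Quotient.exists_rep α
    exact ⟨s, by rw [fval1 hs]; exact ht.2⟩
  · intro a t ht
    exact ⟨Quotient.mk st a, by rw [fval1 rfl]; exact ht.2⟩
  · intro α
    refine ⟨hsub α, ?_⟩
    intro t ht
    have hlev : {a : S | t ≤ f α a} = {a : S | Quotient.mk st a = α} := by
      ext a
      simp only [Set.mem_setOf_eq]
      constructor
      · intro hta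
        by_contra hcon
        rw [fval0 hcon] at hta
        linarith [ht.1]
      · intro hcon
        rw [fval1 hcon]
        exact ht.2
    rw [hlev]
    exact hcs α
end
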